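/- The dynamic programming recurrence correctly computes f_i(v): for i = 1, f_1(v) equals ∞ if v is white, 0 if v is red, and min over red vertices u of δ(u,v) if v is blue; for i ≥ 2, f_i(v) equals ∞ if v is white, min over edges (u,v) of (f_{i−1}(u) + x_u) if v is red, and min over red u of (f_i(u) + δ(u,v)) if v is blue. Here δ(u,v) is the minimum of x_u + x_{v₂} + ⋯ + x_{v_{k−1}} over paths u v₂ … v_{k−1} v with all internal vertices v₂,…,v_{k−1} blue. -/

import Mathlib

open scoped ENNReal

/-- Colors of vertices in the circuit DAG. -/
inductive Color where
  | white | blue | red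
deriving DecidableEq

variable {V : Type*}

/-- Number of red vertices on a path (given as a list of vertices). -/
def redCount (color : V → Color) (p : List V) : ℕ :=
  (p.filter (fun v => decide (color v = Color.red))).length

/-- Length of a path: the sum of the weights of its non-final vertices. -/
noncomputable def plen (x : V → ℝ≥0∞) (p : List V) : ℝ≥0∞ :=
  (p.dropLast.map x).sum

/-- `p` is a `(v,i)`-interesting path: it starts at a red vertex, ends at `v`, and
traverses exactly `i` red vertices. -/
def VIPath (E : V → V → Prop) (color : V → Color) (v : V) (i : ℕ) (p : List V) : Prop :=
  ∃ hp : p ≠ [], p.Chain' E ∧ color (p.head hp) = Color.red ∧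
    p.getLast hp = v ∧ redCount color p = i

/-- `p` is an interesting path: it starts and ends at red vertices and traverses exactly
`L+1` red vertices. -/
def IntPath (E : V → V → Prop) (color : V → Color) (L : ℕ) (p : List V) : Prop :=
  ∃ hp : p ≠ [], p.Chain' E ∧ color (p.head hp) = Color.red ∧
    color (p.getLast hp) = Color.red ∧ redCount color p = L + 1

/-- `f_i(v)`: the minimum length of a `(v,i)`-interesting path (`∞` if none exists). -/
noncomputable def fval (E : V → V → Prop) (color : V → Color) (x : V → ℝ≥0∞)
    (v : V) (i : ℕ) : ℝ≥0∞ :=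
  sInf (plen x '' {p : List V | VIPath E color v i p})

/-- `δ(u,w)`: the minimum of `x_u + x_{v₂} + ⋯ + x_{v_{k−1}}` over paths `u v₂ … v_{k−1} w`
whose internal vertices `v₂,…,v_{k−1}` are all blue (`∞` if none exists). -/
noncomputable def deltaW (E : V → V → Prop) (color : V → Color) (x : V → ℝ≥0∞)
    (u w : V) : ℝ≥0∞ :=
  sInf (plen x '' {p : List V | ∃ hp : p ≠ [], p.Chain' E ∧ p.head hp = u ∧
    p.getLast hp = w ∧ 2 ≤ p.length ∧ ∀ z ∈ (p.drop 1).dropLast, color z = Color.blue})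

/-!
A `(v,i)`-interesting path is either the single red vertex `v` or a `(u,j)`-interesting path
followed by an edge `u → v`, where `j = i - 1` if `v` is red and `j = i` otherwise; this gives
the red case, and the white case is empty since white vertices have no in-edges. For blue `v`,
appending a path from `u` to `v` with blue interior to a `(u,i)`-interesting path adds no red
vertex, which gives `f_i(v) ≤ f_i(u) + δ(u,v)`. Conversely, peeling edges off the end of a
`(v,i)`-interesting path until a red vertex `u` is reached splits it into a `(u,i)`-interesting
path and a path counted in `δ(u,v)`.
-/

section PathLength

variable (x : V → ℝ≥0∞)

theorem redCount_append (color : V → Color) (p q : List V) :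
    redCount color (p ++ q) = redCount color p + redCount color q := by
  simp [redCount, List.filter_append]

theorem sum_map_eq_plen_add {q : List V} (hq : q ≠ []) :
    (q.map x).sum = plen x q + x (q.getLast hq) := by
  conv_lhs => rw [← List.dropLast_append_getLast hq]
  simp [plen]

theorem plen_append {q t : List V} (ht : t ≠ []) :
    plen x (q ++ t) = (q.map x).sum + plen x t := by
  simp [plen, List.dropLast_append_of_ne_nil ht]

theorem plen_append_singleton {q : List V} (hq : q ≠ []) (a : V) :
    plen x (q ++ [a]) = plen x q + x (q.getLast hq) := by
  rw [plen_append x (List.cons_ne_nil a []), sum_map_eq_plen_add x hq]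
  simp [plen]

theorem plen_append_of_getLast_eq {q t : List V} {u : V} (hq : q ≠ []) (hu : q.getLast hq = u)
    (ht : t ≠ []) : plen x (q ++ t) = plen x q + plen x (u :: t) := by
  rw [plen_append x ht, sum_map_eq_plen_add x hq, hu, ← List.singleton_append,
    plen_append x ht, add_assoc]
  simp

end PathLength

section VIPath

variable {E : V → V → Prop} {color : V → Color} {u v a : V} {i j : ℕ} {p q : List V}

theorem VIPath.ne_nil (hp : VIPath E color v i p) : p ≠ [] := hp.1

theorem VIPath.getLast_eq (hp : VIPath E color v i p) : p.getLast hp.ne_nil = v := hp.2.2.2.1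

theorem viPath_singleton_iff : VIPath E color v i [a] ↔ a = v ∧ color v = .red ∧ i = 1 := by
  constructor
  · rintro ⟨_, -, hred, rfl, hcount⟩
    simp only [List.head_cons] at hred
    simp only [redCount, List.filter_singleton, hred, decide_true, cond_true,
      List.length_singleton] at hcount
    exact ⟨rfl, hred, hcount.symm⟩
  · rintro ⟨rfl, hred, rfl⟩
    exact ⟨List.cons_ne_nil a [], List.isChain_singleton a, hred, rfl, by simp [redCount, hred]⟩

theorem VIPath.append_singleton (hq : VIPath E color u j q) (hE : E u v) :
    VIPath E color v (j + redCount color [v]) (q ++ [v]) := by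
  obtain ⟨hne, hchain, hhead, hlast, hcount⟩ := hq
  refine ⟨by simp, ?_, by rwa [List.head_append_of_ne_nil hne], by simp,
    by rw [redCount_append, hcount]⟩
  refine hchain.append (List.isChain_singleton v) ?_
  simp [List.getLast?_eq_some_getLast hne, hlast, hE]

theorem VIPath.of_append_singleton (hp : VIPath E color v i (q ++ [a])) (hq : q ≠ []) :
    a = v ∧ E (q.getLast hq) v ∧ VIPath E color (q.getLast hq) (i - redCount color [v]) q := by
  obtain ⟨_, hchain, hhead, hlast, hcount⟩ := hp
  obtain rfl : a = v := by simpa using hlast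
  refine ⟨rfl, hchain.rel_getLast_head_of_append hq (List.cons_ne_nil a []),
    hq, hchain.left_of_append, by rwa [List.head_append_of_ne_nil hq] at hhead, rfl, ?_⟩
  rw [← hcount, redCount_append]
  omega

theorem VIPath.color_ne_white (hwhite : ∀ v u : V, color v = .white → ¬ E u v)
    (hp : VIPath E color v i p) : color v ≠ .white := by
  obtain rfl | ⟨q, a, rfl⟩ := p.eq_nil_or_concat'
  · exact absurd rfl hp.ne_nil
  obtain rfl | hq := eq_or_ne q []
  · simp [(viPath_singleton_iff.mp hp).2.1]
  · exact fun hv => hwhite v _ hv (hp.of_append_singleton hq).2.1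

end VIPath

section BlueInteriorPath

variable {E : V → V → Prop} {color : V → Color} {u v w : V} {i : ℕ} {q r : List V}

def BlueInteriorPath (E : V → V → Prop) (color : V → Color) (u w : V) (p : List V) : Prop :=
  ∃ hp : p ≠ [], p.IsChain E ∧ p.head hp = u ∧ p.getLast hp = w ∧ 2 ≤ p.length ∧
    ∀ z ∈ (p.drop 1).dropLast, color z = .blue

theorem BlueInteriorPath.ne_nil (hr : BlueInteriorPath E color u v r) : r ≠ [] := hr.1

theorem BlueInteriorPath.getLast_eq (hr : BlueInteriorPath E color u v r) :
    r.getLast hr.ne_nil = v := hr.2.2.2.1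

theorem BlueInteriorPath.eq_cons (hr : BlueInteriorPath E color u v r) : r = u :: r.tail := by
  obtain ⟨hne, -, rfl, -⟩ := hr
  exact (List.cons_head_tail hne).symm

theorem BlueInteriorPath.tail_ne_nil (hr : BlueInteriorPath E color u v r) : r.tail ≠ [] := by
  rw [← List.length_pos_iff, List.length_tail]
  have := hr.2.2.2.2.1
  omega

theorem BlueInteriorPath.color_of_mem_tail (hr : BlueInteriorPath E color u v r)
    (hv : color v = .blue) {z : V} (hz : z ∈ r.tail) : color z = .blue := by
  rw [← List.dropLast_append_getLast hr.tail_ne_nil, List.getLast_tail, hr.getLast_eq] at hz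
  rcases List.mem_append.mp hz with hz | hz
  · exact hr.2.2.2.2.2 z (by rwa [List.drop_one])
  · rwa [List.mem_singleton.mp hz]

theorem blueInteriorPath_pair (hE : E u v) : BlueInteriorPath E color u v [u, v] :=
  ⟨List.cons_ne_nil u [v], List.isChain_pair.mpr hE, rfl, rfl, le_rfl, by simp⟩

theorem BlueInteriorPath.append_singleton (hr : BlueInteriorPath E color u w r)
    (hw : color w = .blue) (hE : E w v) : BlueInteriorPath E color u v (r ++ [v]) := by
  have ⟨hne, hchain, hhead, hlast, hlen, _⟩ := hr
  refine ⟨by simp, ?_, by rwa [List.head_append_of_ne_nil hne], by simp, by simp; omega, ?_⟩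
  · exact hchain.append (List.isChain_singleton v)
      (by simp [List.getLast?_eq_some_getLast hne, hlast, hE])
  · rw [List.drop_one, List.tail_append_of_ne_nil hne, List.dropLast_concat]
    exact fun z hz => hr.color_of_mem_tail hw hz

theorem VIPath.append_tail (hq : VIPath E color u i q) (hr : BlueInteriorPath E color u v r)
    (hv : color v = .blue) : VIPath E color v i (q ++ r.tail) := by
  obtain ⟨hqne, hqchain, hqhead, hqlast, hqcount⟩ := hq
  have hchain : (u :: r.tail).IsChain E := hr.eq_cons ▸ hr.2.1
  have hcount : redCount color r.tail = 0 := by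
    simp only [redCount, List.length_eq_zero_iff, List.filter_eq_nil_iff]
    intro z hz
    simp [hr.color_of_mem_tail hv hz]
  refine ⟨by simp [hqne], ?_, by rwa [List.head_append_of_ne_nil hqne], ?_, ?_⟩
  · refine hqchain.append hchain.tail ?_
    simpa [List.getLast?_eq_some_getLast hqne, hqlast] using hchain.rel_head?
  · rw [List.getLast_append_of_ne_nil _ hr.tail_ne_nil, List.getLast_tail, hr.getLast_eq]
  · rw [redCount_append, hqcount, hcount, add_zero]

end BlueInteriorPath

section Recurrence

variable {E : V → V → Prop} {color : V → Color} {x : V → ℝ≥0∞} {u v w : V} {i j : ℕ}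
  {p r : List V}

theorem fval_eq_iInf : fval E color x v i = ⨅ p : {p // VIPath E color v i p}, plen x p :=
  sInf_image'

theorem fval_le (hp : VIPath E color v i p) : fval E color x v i ≤ plen x p :=
  sInf_le ⟨p, hp, rfl⟩

theorem fval_white (hwhite : ∀ v u : V, color v = .white → ¬ E u v) (hv : color v = .white) :
    fval E color x v i = ⊤ := by
  rw [fval_eq_iInf, iInf_eq_top]
  exact fun p => absurd hv (p.2.color_ne_white hwhite)

theorem fval_red_one (hv : color v = .red) : fval E color x v 1 = 0 :=
  le_antisymm ((fval_le (viPath_singleton_iff.mpr ⟨rfl, hv, rfl⟩)).trans_eq (by simp [plen]))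
    zero_le

theorem fval_le_fval_add (hE : E u v) :
    fval E color x v (j + redCount color [v]) ≤ fval E color x u j + x u := by
  rw [fval_eq_iInf (v := u), ENNReal.iInf_add]
  refine le_iInf fun ⟨q, hq⟩ => ?_
  calc fval E color x v (j + redCount color [v]) ≤ plen x (q ++ [v]) :=
        fval_le (hq.append_singleton hE)
    _ = plen x q + x u := by rw [plen_append_singleton x hq.ne_nil, hq.getLast_eq]

theorem fval_red (hv : color v = .red) (hi : 2 ≤ i) :
    fval E color x v i = ⨅ u : {u // E u v}, (fval E color x u (i - 1) + x u) := by
  have hred : redCount color [v] = 1 := by simp [redCount, hv]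
  refine le_antisymm (le_iInf fun ⟨u, hE⟩ => ?_) ?_
  · simpa [hred, Nat.sub_add_cancel (by omega : 1 ≤ i)] using
      fval_le_fval_add (x := x) (color := color) (j := i - 1) hE
  rw [fval_eq_iInf]
  refine le_iInf fun ⟨p, hp⟩ => ?_
  obtain rfl | ⟨q, a, rfl⟩ := p.eq_nil_or_concat'
  · exact absurd rfl hp.ne_nil
  obtain rfl | hq := eq_or_ne q []
  · have := (viPath_singleton_iff.mp hp).2.2
    omega
  obtain ⟨rfl, hE, hq'⟩ := hp.of_append_singleton hq
  rw [hred] at hq'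
  rw [plen_append_singleton x hq]
  exact iInf_le_of_le ⟨_, hE⟩ (add_le_add_left (fval_le hq') _)

theorem deltaW_eq_iInf :
    deltaW E color x u w = ⨅ r : {r // BlueInteriorPath E color u w r}, plen x r :=
  sInf_image'

theorem deltaW_le (hr : BlueInteriorPath E color u w r) : deltaW E color x u w ≤ plen x r :=
  sInf_le ⟨r, hr, rfl⟩

theorem deltaW_le_of_adj (hE : E u w) : deltaW E color x u w ≤ x u :=
  (deltaW_le (blueInteriorPath_pair hE)).trans_eq (by simp [plen])

theorem deltaW_le_deltaW_add (hw : color w = .blue) (hE : E w v) :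
    deltaW E color x u v ≤ deltaW E color x u w + x w := by
  rw [deltaW_eq_iInf (w := w), ENNReal.iInf_add]
  refine le_iInf fun ⟨r, hr⟩ => ?_
  calc deltaW E color x u v ≤ plen x (r ++ [v]) := deltaW_le (hr.append_singleton hw hE)
    _ = plen x r + x w := by rw [plen_append_singleton x hr.ne_nil, hr.getLast_eq]

theorem fval_le_fval_add_deltaW (hv : color v = .blue) :
    fval E color x v i ≤ fval E color x u i + deltaW E color x u v := by
  rw [fval_eq_iInf (v := u), deltaW_eq_iInf, ENNReal.iInf_add]
  refine le_iInf fun ⟨q, hq⟩ => ?_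
  rw [ENNReal.add_iInf]
  refine le_iInf fun ⟨r, hr⟩ => ?_
  calc fval E color x v i ≤ plen x (q ++ r.tail) := fval_le (hq.append_tail hr hv)
    _ = plen x q + plen x r := by
      rw [plen_append_of_getLast_eq x hq.ne_nil hq.getLast_eq hr.tail_ne_nil, ← hr.eq_cons]

theorem iInf_fval_add_deltaW_le_plen (hwhite : ∀ v u : V, color v = .white → ¬ E u v)
    (hv : color v = .blue) (hp : VIPath E color v i p) :
    ⨅ u : {u // color u = .red}, (fval E color x u i + deltaW E color x u v) ≤ plen x p := by
  induction p using List.reverseRecOn generalizing v with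
  | nil => exact absurd rfl hp.ne_nil
  | append_singleton q a ih =>
    obtain rfl | hq := eq_or_ne q []
    · simp [(viPath_singleton_iff.mp hp).2.1] at hv
    obtain ⟨rfl, hE, hq'⟩ := hp.of_append_singleton hq
    simp only [redCount, hv, List.filter_singleton] at hq'
    rw [plen_append_singleton x hq]
    set u := q.getLast hq
    rcases hu : color u
    · exact absurd hu (hq'.color_ne_white hwhite)
    · calc ⨅ w : {w // color w = .red}, (fval E color x w i + deltaW E color x w a)
          ≤ ⨅ w : {w // color w = .red}, (fval E color x w i + deltaW E color x w u + x u) :=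
            iInf_mono fun w => by
              rw [add_assoc]
              exact add_le_add_right (deltaW_le_deltaW_add hu hE) _
        _ = (⨅ w : {w // color w = .red}, (fval E color x w i + deltaW E color x w u)) + x u :=
            ENNReal.iInf_add.symm
        _ ≤ plen x q + x u := add_le_add_left (ih hu hq') _
    · exact iInf_le_of_le ⟨u, hu⟩ (add_le_add (fval_le hq') (deltaW_le_of_adj hE))

theorem fval_blue (hwhite : ∀ v u : V, color v = .white → ¬ E u v) (hv : color v = .blue) :
    fval E color x v i =
      ⨅ u : {u // color u = .red}, (fval E color x u i + deltaW E color x u v) := by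
  refine le_antisymm (le_iInf fun u => fval_le_fval_add_deltaW hv) ?_
  rw [fval_eq_iInf]
  exact le_iInf fun p => iInf_fval_add_deltaW_le_plen hwhite hv p.2

end Recurrence

theorem stmt8_general (E : V → V → Prop) (color : V → Color) (L : ℕ)
    (x : V → ℝ≥0∞)
    (hwhite : ∀ v u : V, color v = Color.white → ¬ E u v) :
    ∀ v : V,
      (fval E color x v 1 =
        if color v = Color.white then ⊤
        else if color v = Color.red then 0
        else ⨅ u : {u : V // color u = Color.red}, deltaW E color x u v) ∧
      (∀ i : ℕ, 2 ≤ i → i ≤ L + 1 →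
        fval E color x v i =
          if color v = Color.white then ⊤
          else if color v = Color.red then
            ⨅ u : {u : V // E u v}, (fval E color x u (i - 1) + x (u : V))
          else ⨅ u : {u : V // color u = Color.red},
            (fval E color x u i + deltaW E color x u v)) := by
  intro v
  rcases hv : color v
  · simp [fval_white hwhite hv]
  · simp only [reduceCtorEq, if_false]
    refine ⟨?_, fun i _ _ => fval_blue hwhite hv⟩
    rw [fval_blue hwhite hv]
    exact iInf_congr fun u => by rw [fval_red_one u.2, zero_add]
  · simp only [reduceCtorEq, if_false, if_true]
    exact ⟨fval_red_one hv, fun i hi _ => fval_red hv hi⟩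

/-- correctness of the dynamic programming recurrence for `f_i(v)`:
`f_1(v)` is `∞` for white `v`, `0` for red `v`, and `min_{u red} δ(u,v)` for blue `v`;
for `2 ≤ i ≤ L+1`, `f_i(v)` is `∞` for white `v`, `min_{(u,v) ∈ E} (f_{i−1}(u) + x_u)` for
red `v`, and `min_{u red} (f_i(u) + δ(u,v))` for blue `v`. -/
theorem stmt8 (E : V → V → Prop) (color : V → Color) (L : ℕ) (hL : 1 ≤ L)
    (x : V → ℝ≥0∞)
    (hwhite : ∀ v u : V, color v = Color.white → ¬ E u v) :
    ∀ v : V,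
      (fval E color x v 1 =
        if color v = Color.white then ⊤
        else if color v = Color.red then 0
        else ⨅ u : {u : V // color u = Color.red}, deltaW E color x u v) ∧
      (∀ i : ℕ, 2 ≤ i → i ≤ L + 1 →
        fval E color x v i =
          if color v = Color.white then ⊤
          else if color v = Color.red then
            ⨅ u : {u : V // E u v}, (fval E color x u (i - 1) + x (u : V))
          else ⨅ u : {u : V // color u = Color.red},
            (fval E color x u i + deltaW E color x u v)) :=
  stmt8_general E color L x hwhite
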